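/- Let Ω be a compact metric space, μ a Borel probability measure, T : Ω → Ω a homeomorphism, and f : Ω → ℝ bounded measurable, |f| ≤ λ. Suppose f has an essential limit l at ω₀ and f is continuous at Tⁿ(ω₀) for all n < 0. Let ν be the pushforward of μ under ω ↦ V_ω where V_ω(n) = f(Tⁿ(ω)). Then there exists V ∈ supp(ν) ⊆ [−λ,λ]^ℤ with V(0) = l and V(n) = V_{ω₀}(n) for all n < 0. -/

import Mathlib

open Filter MeasureTheory

/-- `l` is an essential limit of `f` at `ω₀` w.r.t. the measure `μ`. -/
def IsEssentialLimit {Ω : Type*} [TopologicalSpace Ω] [MeasurableSpace Ω]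
    (μ : Measure Ω) (f : Ω → ℝ) (ω₀ : Ω) (l : ℝ) : Prop :=
  ∃ Ωs : ℕ → Set Ω, (∀ k, 0 < μ (Ωs k)) ∧
    ∀ x : ℕ → Ω, (∀ k, x k ∈ Ωs k) →
      Tendsto x atTop (nhds ω₀) ∧ Tendsto (fun k => f (x k)) atTop (nhds l)

/-- The (closed) support of a Borel measure. -/
def msupport {X : Type*} [TopologicalSpace X] [MeasurableSpace X]
    (ν : Measure X) : Set X := {x | ∀ U ∈ nhds x, 0 < ν U}

/-- For a homeomorphism `T`, every integer power of the underlying permutation is continuous. -/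
lemma cont_zpow {Ω : Type*} [TopologicalSpace Ω] (T : Ω ≃ₜ Ω) :
    ∀ n : ℤ, Continuous fun ω => ((T.toEquiv : Equiv.Perm Ω) ^ n) ω := by
  intro n
  induction n using Int.induction_on with
  | zero => simpa using continuous_id'
  | succ k ih =>
      have : ∀ ω, ((T.toEquiv : Equiv.Perm Ω) ^ ((k : ℤ) + 1)) ω
          = ((T.toEquiv : Equiv.Perm Ω) ^ (k : ℤ)) (T ω) := by
        intro ω; rw [zpow_add_one]; rfl
      simpa only [this, Function.comp_def] using ih.comp T.continuous
  | pred k ih =>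
      have : ∀ ω, ((T.toEquiv : Equiv.Perm Ω) ^ (-(k : ℤ) - 1)) ω
          = ((T.toEquiv : Equiv.Perm Ω) ^ (-(k : ℤ))) (T.symm ω) := by
        intro ω; rw [zpow_sub_one]; rfl
      simpa only [this, Function.comp_def] using ih.comp T.symm.continuous

/-- The support of a Borel measure is closed. -/
lemma msupport_closed {X : Type*} [TopologicalSpace X] [MeasurableSpace X]
    (ν : Measure X) : IsClosed (msupport ν) := by
  rw [← isOpen_compl_iff, isOpen_iff_mem_nhds]
  intro x hx
  simp only [msupport, Set.mem_compl_iff, Set.mem_setOf_eq, not_forall] at hx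
  obtain ⟨U, hU, hν⟩ := hx
  obtain ⟨V, hVU, hVo, hxV⟩ := mem_nhds_iff.mp hU
  filter_upwards [hVo.mem_nhds hxV] with y hy
  simp only [msupport, Set.mem_compl_iff, Set.mem_setOf_eq, not_forall]
  exact ⟨V, hVo.mem_nhds hy, fun h => hν (h.trans_le (measure_mono hVU))⟩

theorem stmt7 {Ω : Type*} [MetricSpace Ω] [CompactSpace Ω]
    [MeasurableSpace Ω] [BorelSpace Ω]
    (μ : Measure Ω) [IsProbabilityMeasure μ]
    (T : Ω ≃ₜ Ω) (lam : ℝ) (f : Ω → ℝ) (hf : Measurable f)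
    (hbdd : ∀ ω, |f ω| ≤ lam)
    (ω₀ : Ω) (l : ℝ) (hl : IsEssentialLimit μ f ω₀ l)
    (hcont : ∀ n : ℤ, n < 0 → ContinuousAt f (((T.toEquiv : Equiv.Perm Ω) ^ n) ω₀)) :
    ∃ V : ℤ → ℝ,
      V ∈ msupport (μ.map (fun ω => fun n : ℤ => f (((T.toEquiv : Equiv.Perm Ω) ^ n) ω))) ∧
      (∀ n, |V n| ≤ lam) ∧ V 0 = l ∧
      ∀ n : ℤ, n < 0 → V n = f (((T.toEquiv : Equiv.Perm Ω) ^ n) ω₀) := by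
  classical
  set Φ : Ω → ℤ → ℝ := fun ω => fun n : ℤ => f (((T.toEquiv : Equiv.Perm Ω) ^ n) ω) with hΦ
  have hΦm : Measurable Φ :=
    measurable_pi_lambda _ fun n => hf.comp (cont_zpow T n).measurable
  set ν : Measure (ℤ → ℝ) := μ.map Φ with hν
  -- the complement of the support is null
  have hnull : ν (msupport ν)ᶜ = 0 := by
    apply measure_null_of_locally_null
    intro x hx
    simp only [msupport, Set.mem_compl_iff, Set.mem_setOf_eq, not_forall] at hx
    obtain ⟨U, hU, hνU⟩ := hx
    exact ⟨U, mem_nhdsWithin_of_mem_nhds hU, by simpa using le_of_not_gt hνU⟩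
  have hpre : μ (Φ ⁻¹' (msupport ν)ᶜ) = 0 := by
    rw [← Measure.map_apply hΦm (msupport_closed ν).isOpen_compl.measurableSet]
    exact hnull
  obtain ⟨Ωs, hΩs, hseq⟩ := hl
  -- choose points in each Ωs k whose image lies in the support
  have hpick : ∀ k, ∃ ω, ω ∈ Ωs k ∧ Φ ω ∈ msupport ν := by
    intro k
    have h1 : 0 < μ (Ωs k ∩ Φ ⁻¹' msupport ν) := by
      by_contra h
      have h0 : μ (Ωs k ∩ Φ ⁻¹' msupport ν) = 0 := by simpa using le_of_not_gt h
      have : μ (Ωs k) ≤ μ (Ωs k ∩ Φ ⁻¹' msupport ν) + μ (Ωs k \ Φ ⁻¹' msupport ν) :=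
        measure_le_inter_add_diff _ _ _
      have h2 : μ (Ωs k \ Φ ⁻¹' msupport ν) = 0 :=
        measure_mono_null (fun x hx => hx.2) hpre
      rw [h0, h2, add_zero] at this
      exact absurd this (not_le.mpr (hΩs k))
    obtain ⟨ω, hω⟩ := nonempty_of_measure_ne_zero h1.ne'
    exact ⟨ω, hω.1, hω.2⟩
  choose x hxΩ hxS using hpick
  obtain ⟨hx₀, hfl⟩ := hseq x hxΩ
  -- compactness: extract a convergent subsequence of Φ ∘ x in [-lam, lam]^ℤ
  have hcomp : IsCompact (Set.pi Set.univ fun _ : ℤ => Set.Icc (-lam) lam) :=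
    isCompact_univ_pi fun _ => isCompact_Icc
  have hmem : ∀ k, Φ (x k) ∈ Set.pi Set.univ fun _ : ℤ => Set.Icc (-lam) lam := by
    intro k n _
    exact abs_le.mp (hbdd _)
  obtain ⟨V, hVmem, φ, hφ, hVlim⟩ := hcomp.tendsto_subseq hmem
  refine ⟨V, ?_, ?_, ?_, ?_⟩
  · -- V in the support, since support is closed
    exact (msupport_closed ν).mem_of_tendsto hVlim
      (Eventually.of_forall fun k => hxS (φ k))
  · intro n; exact abs_le.mpr (hVmem n (Set.mem_univ n))
  · -- V 0 = l
    have h1 : Tendsto (fun k => Φ (x (φ k)) 0) atTop (nhds (V 0)) :=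
      ((continuous_apply (0 : ℤ)).continuousAt.tendsto.comp hVlim)
    have h2 : Tendsto (fun k => Φ (x (φ k)) 0) atTop (nhds l) := by
      have := hfl.comp hφ.tendsto_atTop
      simpa [hΦ, Function.comp_def] using this
    exact tendsto_nhds_unique h1 h2
  · intro n hn
    have h1 : Tendsto (fun k => Φ (x (φ k)) n) atTop (nhds (V n)) :=
      ((continuous_apply n).continuousAt.tendsto.comp hVlim)
    have h2 : Tendsto (fun k => Φ (x (φ k)) n) atTop
        (nhds (f (((T.toEquiv : Equiv.Perm Ω) ^ n) ω₀))) := by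
      have hx' : Tendsto (fun k => x (φ k)) atTop (nhds ω₀) := hx₀.comp hφ.tendsto_atTop
      have := ((hcont n hn).comp ((cont_zpow T n).continuousAt (x := ω₀))).tendsto.comp hx'
      simpa [hΦ, Function.comp_def] using this
    exact tendsto_nhds_unique h1 h2
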